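/- arXiv:2307.09318 — 2 statements merged into one kernel-verified Lean document; each statement's English description precedes it below -/
import Mathlib

section
/- For the potential V(x,y) = y²(b − a/x²)/2 with b = 0, a = 2ν(ν+1)E, ν ≠ 0, −1, −1/2, and free-particle path from x₀ > 0 to x₁ > x₀ in time t₁, the matrix entry φ₁₂(t₁) computed from ξ^{(1)}(τ) = τ^{ν+1}, ξ^{(2)}(τ) = τ^{−ν} via the Wronskian formula equals φ₁₂(t₁) = (x₀ t₁ / ((2ν+1)(x₁ − x₀))) · ((x₁/x₀)^{ν+1} − (x₁/x₀)^{−ν}). -/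
/-- For the potential `V = y²(b − a/x²)/2` with `b = 0`, `a = 2ν(ν+1)E`,
`ν ∉ {0,−1,−1/2}`, and the free-particle path from `x₀ > 0` to `x₁ > x₀` in time `t₁`,
the matrix entry `φ₁₂(t₁)` computed from `ξ⁽¹⁾(τ) = τ^{ν+1}`, `ξ⁽²⁾(τ) = τ^{−ν}` via the
Wronskian formula (with `d/dt = √(2E) d/dτ`) equals
`(x₀ t₁ / ((2ν+1)(x₁−x₀))) ((x₁/x₀)^{ν+1} − (x₁/x₀)^{−ν})`. -/
theorem euler_cauchy_phi12 (ν : ℝ) (hν0 : ν ≠ 0) (hν1 : ν ≠ -1) (hν2 : ν ≠ -1/2)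
    (x₀ x₁ t₁ E a b : ℝ) (hx₀ : 0 < x₀) (hx₁ : x₀ < x₁) (ht₁ : 0 < t₁)
    (hb : b = 0) (hE : E = ((x₁ - x₀) / t₁) ^ 2 / 2) (ha : a = 2 * ν * (ν + 1) * E)
    (ξ₁ ξ₂ : ℝ → ℝ)
    (hξ₁ : ∀ τ : ℝ, ξ₁ τ = τ ^ (ν + 1)) (hξ₂ : ∀ τ : ℝ, ξ₂ τ = τ ^ (-ν))
    (D : ℝ)
    -- Wronskian with respect to t at t = 0 (i.e. at τ = x₀), using d/dt = √(2E) d/dτ: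
    (hD : D = ξ₁ x₀ * (Real.sqrt (2 * E) * deriv ξ₂ x₀)
        - ξ₂ x₀ * (Real.sqrt (2 * E) * deriv ξ₁ x₀))
    (φ₁₂ : ℝ) (hφ : φ₁₂ = (ξ₁ x₀ * ξ₂ x₁ - ξ₂ x₀ * ξ₁ x₁) / D) :
    φ₁₂ = x₀ * t₁ / ((2 * ν + 1) * (x₁ - x₀))
        * ((x₁ / x₀) ^ (ν + 1) - (x₁ / x₀) ^ (-ν)) := by
  have hx₁0 : 0 < x₁ := hx₀.trans hx₁
  have hξ₁' : ξ₁ = fun τ : ℝ => τ ^ (ν + 1) := funext hξ₁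
  have hξ₂' : ξ₂ = fun τ : ℝ => τ ^ (-ν) := funext hξ₂
  -- derivatives
  have hd₁ : deriv ξ₁ x₀ = (ν + 1) * x₀ ^ ν := by
    rw [hξ₁']
    have := (Real.hasDerivAt_rpow_const (x := x₀) (p := ν + 1) (Or.inl hx₀.ne')).deriv
    rw [this]; ring_nf
  have hd₂ : deriv ξ₂ x₀ = -ν * x₀ ^ (-ν - 1) := by
    rw [hξ₂']
    exact (Real.hasDerivAt_rpow_const (x := x₀) (p := -ν) (Or.inl hx₀.ne')).deriv
  -- sqrt(2E)
  have hsub : 0 < x₁ - x₀ := sub_pos.mpr hx₁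
  have hsq : Real.sqrt (2 * E) = (x₁ - x₀) / t₁ := by
    rw [hE]
    have : 2 * (((x₁ - x₀) / t₁) ^ 2 / 2) = ((x₁ - x₀) / t₁) ^ 2 := by ring
    rw [this, Real.sqrt_sq (by positivity)]
  -- abbreviations
  set a₀ := x₀ ^ ν with ha₀
  set a₁ := x₁ ^ ν with ha₁
  have ha₀pos : 0 < a₀ := Real.rpow_pos_of_pos hx₀ ν
  have ha₁pos : 0 < a₁ := Real.rpow_pos_of_pos hx₁0 ν
  have e1 : x₀ ^ (ν + 1) = a₀ * x₀ := by
    rw [ha₀, Real.rpow_add hx₀, Real.rpow_one]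
  have e2 : x₀ ^ (-ν) = a₀⁻¹ := by rw [ha₀, Real.rpow_neg hx₀.le]
  have e3 : x₁ ^ (ν + 1) = a₁ * x₁ := by
    rw [ha₁, Real.rpow_add hx₁0, Real.rpow_one]
  have e4 : x₁ ^ (-ν) = a₁⁻¹ := by rw [ha₁, Real.rpow_neg hx₁0.le]
  have e5 : x₀ ^ (-ν - 1) = (a₀ * x₀)⁻¹ := by
    rw [show -ν - 1 = -(ν + 1) by ring, Real.rpow_neg hx₀.le, e1]
  have e6 : (x₁ / x₀) ^ (ν + 1) = (a₁ * x₁) / (a₀ * x₀) := by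
    rw [Real.div_rpow hx₁0.le hx₀.le, e1, e3]
  have e7 : (x₁ / x₀) ^ (-ν) = a₀ / a₁ := by
    rw [Real.div_rpow hx₁0.le hx₀.le, e2, e4, div_eq_div_iff (by positivity) (by positivity)]
    field_simp
  have hD' : D = -(2 * ν + 1) * ((x₁ - x₀) / t₁) := by
    rw [hD, hsq, hd₁, hd₂, hξ₁ x₀, hξ₂ x₀, e1, e2, e5]
    field_simp
    ring
  have h2ν : (2 * ν + 1) ≠ 0 := by
    intro h; apply hν2; linarith
  rw [hφ, hD', hξ₁ x₀, hξ₁ x₁, hξ₂ x₀, hξ₂ x₁, e1, e2, e3, e4, e6, e7,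
    div_eq_iff (mul_ne_zero (neg_ne_zero.mpr h2ν) (by positivity))]
  field_simp
  ring
end

section
/- Let ℘ be the Weierstrass elliptic function with invariants g₂, g₃ (discriminant Δ = g₂³ − 27g₃² ≠ 0), set h(w) = 4w³ − g₂w − g₃, and let B ∈ ℂ with h(B) ≠ 0. Then the functions ξ^{±}(t) = √(B − ℘(t+ω₃)) · exp(±(1/2)√(h(B)) ∫₀^t ds/(B − ℘(s+ω₃))) solve the Lamé equation ξ̈ = (B + 2℘(t+ω₃)) ξ (on an interval where B − ℘(t+ω₃) ≠ 0), and their Wronskian equals the constant ∓√(h(B)). -/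
/-!
Substituting `ξ = q · exp (k I)` with `I' = q⁻²` gives `ξ' = (q' + k / q) exp (k I)` and
`ξ'' = (q'' + k² / q³) exp (k I)`, so `ξ'' = P ξ` as soon as `q` solves the Ermakov–Pinney
equation `q'' = P q - k² / q³`, and the Wronskian of the pair `k, -k` is `-2k`.
If `q² = B - ℘`, differentiating twice and eliminating `℘'` and `℘''` with the Weierstrass
equations shows that `q` solves this equation with `P = B + 2℘` and `4k² = h(B)`.
-/

open Set Complex

theorem hasDerivAt_integral_of_continuousOn {E : Type*} [NormedAddCommGroup E]
    [NormedSpace ℝ E] [CompleteSpace E] {f : ℝ → E} {s : Set ℝ} {a t : ℝ} (hs : IsOpen s)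
    (hs' : s.OrdConnected) (hf : ContinuousOn f s) (ha : a ∈ s) (ht : t ∈ s) :
    HasDerivAt (fun u => ∫ x in a..u, f x) (f t) t :=
  intervalIntegral.integral_hasDerivAt_right (hf.mono (hs'.uIcc_subset ha ht)).intervalIntegrable
    (hf.stronglyMeasurableAtFilter hs t ht) (hf.continuousAt (hs.mem_nhds ht))

theorem ContDiffOn.hasDerivAt_deriv {𝕜 F : Type*} [NontriviallyNormedField 𝕜]
    [NormedAddCommGroup F] [NormedSpace 𝕜 F] {f : 𝕜 → F} {U : Set 𝕜} {t : 𝕜}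
    (hf : ContDiffOn 𝕜 2 f U) (hU : IsOpen U) (ht : t ∈ U) :
    HasDerivAt (deriv f) (deriv (deriv f) t) t :=
  (((hf.deriv_of_isOpen hU (m := 1) (by norm_num)).differentiableOn one_ne_zero).differentiableAt
    (hU.mem_nhds ht)).hasDerivAt

section MulCexp

variable {U : Set ℝ} {q I ξ : ℝ → ℂ} {k : ℂ}

theorem deriv_mul_cexp (hU : IsOpen U) (hq : DifferentiableOn ℝ q U)
    (hq0 : ∀ t ∈ U, q t ≠ 0) (hI : ∀ t ∈ U, HasDerivAt I (q t ^ 2)⁻¹ t)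
    (hξ : ∀ t ∈ U, ξ t = q t * exp (k * I t)) :
    ∀ t ∈ U, deriv ξ t = (deriv q t + k / q t) * exp (k * I t) := by
  intro t ht
  have hqt : HasDerivAt q (deriv q t) t := (hq.differentiableAt (hU.mem_nhds ht)).hasDerivAt
  rw [(show EqOn ξ _ U from fun t ht => hξ t ht).deriv hU ht,
    (hqt.fun_mul ((hI t ht).const_mul k).cexp).deriv]
  field_simp [hq0 t ht]

theorem deriv_deriv_mul_cexp (hU : IsOpen U) (hq : ContDiffOn ℝ 2 q U)
    (hq0 : ∀ t ∈ U, q t ≠ 0) (hI : ∀ t ∈ U, HasDerivAt I (q t ^ 2)⁻¹ t)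
    (hξ : ∀ t ∈ U, ξ t = q t * exp (k * I t)) :
    ∀ t ∈ U, deriv (deriv ξ) t = (deriv (deriv q) t + k ^ 2 / q t ^ 3) * exp (k * I t) := by
  intro t ht
  have hq1 : DifferentiableOn ℝ q U := hq.differentiableOn (by norm_num)
  have hqt : HasDerivAt q (deriv q t) t := (hq1.differentiableAt (hU.mem_nhds ht)).hasDerivAt
  have hξ' : EqOn (deriv ξ) (fun t => (deriv q t + k / q t) * exp (k * I t)) U :=
    deriv_mul_cexp hU hq1 hq0 hI hξ
  rw [hξ'.deriv hU ht, (((hq.hasDerivAt_deriv hU ht).fun_add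
    ((hasDerivAt_const t k).fun_div hqt (hq0 t ht))).fun_mul ((hI t ht).const_mul k).cexp).deriv]
  field_simp [hq0 t ht]
  ring

theorem deriv_deriv_mul_cexp_of_ermakovPinney (hU : IsOpen U) (hq : ContDiffOn ℝ 2 q U)
    (hq0 : ∀ t ∈ U, q t ≠ 0) (hI : ∀ t ∈ U, HasDerivAt I (q t ^ 2)⁻¹ t)
    (hξ : ∀ t ∈ U, ξ t = q t * exp (k * I t)) {P : ℝ → ℂ}
    (hP : ∀ t ∈ U, deriv (deriv q) t = P t * q t - k ^ 2 / q t ^ 3) :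
    ∀ t ∈ U, deriv (deriv ξ) t = P t * ξ t := by
  intro t ht
  rw [deriv_deriv_mul_cexp hU hq hq0 hI hξ t ht, hP t ht, hξ t ht]
  ring

theorem wronskian_mul_cexp_mul_cexp_neg (hU : IsOpen U) (hq : DifferentiableOn ℝ q U)
    (hq0 : ∀ t ∈ U, q t ≠ 0) (hI : ∀ t ∈ U, HasDerivAt I (q t ^ 2)⁻¹ t) {ξp ξm : ℝ → ℂ}
    (hξp : ∀ t ∈ U, ξp t = q t * exp (k * I t)) (hξm : ∀ t ∈ U, ξm t = q t * exp (-k * I t)) :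
    ∀ t ∈ U, ξp t * deriv ξm t - ξm t * deriv ξp t = -2 * k := by
  intro t ht
  have hexp : exp (k * I t) * exp (-k * I t) = 1 := by
    rw [← exp_add, neg_mul, add_neg_cancel, exp_zero]
  rw [deriv_mul_cexp hU hq hq0 hI hξp t ht, deriv_mul_cexp hU hq hq0 hI hξm t ht, hξp t ht,
    hξm t ht]
  have hqq : q t * (q t)⁻¹ = 1 := mul_inv_cancel₀ (hq0 t ht)
  linear_combination (-2 * k * exp (k * I t) * exp (-k * I t)) * hqq - 2 * k * hexp

end MulCexp

theorem ermakovPinney_of_sq_eq_sub_weierstrass {U : Set ℝ} {q g : ℝ → ℂ} {g₂ g₃ B k : ℂ}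
    (hU : IsOpen U) (hq : ContDiffOn ℝ 2 q U) (hq0 : ∀ t ∈ U, q t ≠ 0)
    (hqg : ∀ t ∈ U, q t ^ 2 = B - g t)
    (hg' : ∀ t ∈ U, deriv g t ^ 2 = 4 * g t ^ 3 - g₂ * g t - g₃)
    (hg'' : ∀ t ∈ U, deriv (deriv g) t = 6 * g t ^ 2 - g₂ / 2)
    (hk : 4 * k ^ 2 = 4 * B ^ 3 - g₂ * B - g₃) :
    ∀ t ∈ U, deriv (deriv q) t = (B + 2 * g t) * q t - k ^ 2 / q t ^ 3 := by
  have hq1 : DifferentiableOn ℝ q U := hq.differentiableOn (by norm_num)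
  have hqd : ∀ t ∈ U, HasDerivAt q (deriv q t) t := fun t ht =>
    (hq1.differentiableAt (hU.mem_nhds ht)).hasDerivAt
  have hderiv_g : ∀ t ∈ U, deriv g t = -(2 * q t * deriv q t) := by
    intro t ht
    have hgq : EqOn g (fun t => B - q t ^ 2) U := fun t ht => by
      simp only [hqg t ht, sub_sub_cancel]
    rw [hgq.deriv hU ht, ((hasDerivAt_const t B).fun_sub ((hqd t ht).fun_pow 2)).deriv]
    norm_num
  have hderiv2_g : ∀ t ∈ U,
      deriv (deriv g) t = -(2 * deriv q t ^ 2 + 2 * q t * deriv (deriv q) t) := by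
    intro t ht
    rw [(show EqOn (deriv g) _ U from hderiv_g).deriv hU ht,
      (((hqd t ht).const_mul 2).fun_mul (hq.hasDerivAt_deriv hU ht)).fun_neg.deriv]
    ring
  intro t ht
  have h1 := hg' t ht
  have h2 := hg'' t ht
  rw [hderiv_g t ht] at h1
  rw [hderiv2_g t ht] at h2
  have hcube : deriv (deriv q) t * q t ^ 3 = (B + 2 * g t) * q t ^ 4 - k ^ 2 := by
    linear_combination (-q t ^ 2 / 2) * h2 - h1 / 4 + hk / 4 +
      (-(B + 2 * g t) * q t ^ 2 - (3 * g t ^ 2 - g₂ / 4) - (B + 2 * g t) * (B - g t)) * hqg t ht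
  field_simp [hq0 t ht]
  linear_combination hcube

theorem lame_hermite_halphen_general (g₂ g₃ B r : ℂ)
    (hr : r ^ 2 = 4 * B ^ 3 - g₂ * B - g₃)
    (g : ℝ → ℂ)
    (hg' : ∀ t, (deriv g t) ^ 2 = 4 * g t ^ 3 - g₂ * g t - g₃)
    (hg'' : ∀ t, deriv (deriv g) t = 6 * g t ^ 2 - g₂ / 2)
    (c d : ℝ) (hc : c < 0) (hd : 0 < d)
    (hne : ∀ t ∈ Set.Ioo c d, B - g t ≠ 0)
    (q : ℝ → ℂ) (hq : ContDiffOn ℝ 2 q (Set.Ioo c d))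
    (hq2 : ∀ t ∈ Set.Ioo c d, q t ^ 2 = B - g t)
    (ξp ξm : ℝ → ℂ)
    (hξp : ∀ t ∈ Set.Ioo c d, ξp t =
      q t * Complex.exp ((1 / 2) * r * ∫ s in (0:ℝ)..t, (B - g s)⁻¹))
    (hξm : ∀ t ∈ Set.Ioo c d, ξm t =
      q t * Complex.exp (-((1 / 2) * r) * ∫ s in (0:ℝ)..t, (B - g s)⁻¹)) :
    (∀ t ∈ Set.Ioo c d, deriv (deriv ξp) t = (B + 2 * g t) * ξp t) ∧
    (∀ t ∈ Set.Ioo c d, deriv (deriv ξm) t = (B + 2 * g t) * ξm t) ∧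
    (∀ t ∈ Set.Ioo c d, ξp t * deriv ξm t - ξm t * deriv ξp t = -r) := by
  have hq0 : ∀ t ∈ Ioo c d, q t ≠ 0 := fun t ht h0 =>
    hne t ht (by rw [← hq2 t ht, h0, zero_pow two_ne_zero])
  have hI : ∀ t ∈ Ioo c d,
      HasDerivAt (fun u => ∫ s in (0:ℝ)..u, (B - g s)⁻¹) (q t ^ 2)⁻¹ t := by
    have hcont : ContinuousOn (fun s => (B - g s)⁻¹) (Ioo c d) :=
      ((hq.continuousOn.pow 2).congr fun t ht => (hq2 t ht).symm).inv₀ hne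
    intro t ht
    rw [hq2 t ht]
    exact hasDerivAt_integral_of_continuousOn isOpen_Ioo ordConnected_Ioo hcont ⟨hc, hd⟩ ht
  have hEP : ∀ k : ℂ, 4 * k ^ 2 = 4 * B ^ 3 - g₂ * B - g₃ →
      ∀ t ∈ Ioo c d, deriv (deriv q) t = (B + 2 * g t) * q t - k ^ 2 / q t ^ 3 :=
    fun k hk => ermakovPinney_of_sq_eq_sub_weierstrass isOpen_Ioo hq hq0 hq2
      (fun t _ => hg' t) (fun t _ => hg'' t) hk
  refine ⟨?_, ?_, ?_⟩
  · exact deriv_deriv_mul_cexp_of_ermakovPinney isOpen_Ioo hq hq0 hI hξp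
      (hEP _ (by linear_combination hr))
  · exact deriv_deriv_mul_cexp_of_ermakovPinney isOpen_Ioo hq hq0 hI hξm
      (hEP _ (by linear_combination hr))
  · intro t ht
    rw [wronskian_mul_cexp_mul_cexp_neg isOpen_Ioo (hq.differentiableOn (by norm_num)) hq0 hI
      hξp hξm t ht]
    ring

/-- Hermite–Halphen solutions of the `n = 1` Lamé equation. Let `g(t) = ℘(t+ω₃)` where
`℘` is the Weierstrass function with invariants `g₂, g₃` (`Δ = g₂³−27g₃² ≠ 0`), i.e.
`(g')² = 4g³ − g₂g − g₃` and `g'' = 6g² − g₂/2`. Let `B ∈ ℂ` with `h(B) = 4B³−g₂B−g₃ ≠ 0`,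
let `r` be a square root of `h(B)` and `q` a smooth branch of `√(B − g(t))` on an interval
where `B − g(t) ≠ 0`. Then
`ξ^{±}(t) = √(B − g(t)) exp(±(1/2)√(h(B)) ∫₀^t ds/(B − g(s)))` solve
`ξ̈ = (B + 2g(t)) ξ` and their Wronskian is the constant `−√(h(B))`. -/
theorem lame_hermite_halphen (g₂ g₃ B r : ℂ)
    (hΔ : g₂ ^ 3 - 27 * g₃ ^ 2 ≠ 0)
    (hhB : 4 * B ^ 3 - g₂ * B - g₃ ≠ 0)
    (hr : r ^ 2 = 4 * B ^ 3 - g₂ * B - g₃)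
    (g : ℝ → ℂ) (hg : ContDiff ℝ 2 g)
    (hg' : ∀ t, (deriv g t) ^ 2 = 4 * g t ^ 3 - g₂ * g t - g₃)
    (hg'' : ∀ t, deriv (deriv g) t = 6 * g t ^ 2 - g₂ / 2)
    (c d : ℝ) (hc : c < 0) (hd : 0 < d)
    (hne : ∀ t ∈ Set.Ioo c d, B - g t ≠ 0)
    (q : ℝ → ℂ) (hq : ContDiffOn ℝ 2 q (Set.Ioo c d))
    (hq2 : ∀ t ∈ Set.Ioo c d, q t ^ 2 = B - g t)
    (ξp ξm : ℝ → ℂ)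
    (hξp : ∀ t ∈ Set.Ioo c d, ξp t =
      q t * Complex.exp ((1 / 2) * r * ∫ s in (0:ℝ)..t, (B - g s)⁻¹))
    (hξm : ∀ t ∈ Set.Ioo c d, ξm t =
      q t * Complex.exp (-((1 / 2) * r) * ∫ s in (0:ℝ)..t, (B - g s)⁻¹)) :
    (∀ t ∈ Set.Ioo c d, deriv (deriv ξp) t = (B + 2 * g t) * ξp t) ∧
    (∀ t ∈ Set.Ioo c d, deriv (deriv ξm) t = (B + 2 * g t) * ξm t) ∧
    (∀ t ∈ Set.Ioo c d, ξp t * deriv ξm t - ξm t * deriv ξp t = -r) :=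
  lame_hermite_halphen_general g₂ g₃ B r hr g hg' hg'' c d hc hd hne q hq hq2 ξp ξm hξp hξm
end
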